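/- arXiv:2405.02918 — 6 statements merged into one kernel-verified Lean document; each statement's English description precedes it below -/
import Mathlib

section
/- Let K ≥ 1, let (bᵐ, uᵐ) and (bⁿ, uⁿ) be opinions over K classes with equal uncertainty uᵐ = uⁿ = û > 0, and let C = 1 − ∑_{i ≠ j} bᵐ i · bⁿ j with C > 0. Let k̃ be an index such that for every j ≠ k̃ one has bᵐ j · bⁿ j < bᵐ k̃ · bⁿ k̃ and û · |bᵐ j + bⁿ j − (bᵐ k̃ + bⁿ k̃)| < bᵐ k̃ · bⁿ k̃ − bᵐ j · bⁿ j. Then the belief constraint fusion (BCF) combined opinion (b, u) satisfies b k̃ > b j for every j ≠ k̃; that is, the combined opinion believes in the class that both opinions agree on. -/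
/-- If two opinions are equally confident (uᵐ = uⁿ = û > 0) and for every
class `j ≠ k̃` both `bᵐ j · bⁿ j < bᵐ k̃ · bⁿ k̃` and
`û · |bᵐ j + bⁿ j − (bᵐ k̃ + bⁿ k̃)| < bᵐ k̃ · bⁿ k̃ − bᵐ j · bⁿ j`, then the BCF combined
opinion believes in the class `k̃` that both opinions agree on. -/
theorem bcf_believes_agreed_class
    (K : ℕ) (hK : 1 ≤ K)
    (bm bn : Fin K → ℝ) (um un uhat : ℝ)
    (hbm : ∀ k, 0 ≤ bm k) (hum : 0 ≤ um) (hsm : (∑ k, bm k) + um = 1)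
    (hbn : ∀ k, 0 ≤ bn k) (hun : 0 ≤ un) (hsn : (∑ k, bn k) + un = 1)
    (hmeq : um = uhat) (hneq : un = uhat) (huhat : 0 < uhat)
    (C : ℝ)
    (hC : C = 1 - ∑ i, ∑ j, if i ≠ j then bm i * bn j else 0)
    (hCpos : 0 < C)
    (ktil : Fin K)
    (hagree : ∀ j, j ≠ ktil → bm j * bn j < bm ktil * bn ktil)
    (hcond : ∀ j, j ≠ ktil →
      uhat * |bm j + bn j - (bm ktil + bn ktil)| < bm ktil * bn ktil - bm j * bn j)
    (b : Fin K → ℝ)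
    (hb : ∀ k, b k = (bm k * bn k + bm k * un + bn k * um) / C) :
    ∀ j, j ≠ ktil → b j < b ktil := by
  intro j hj
  rw [hb, hb]
  subst hmeq hneq
  have h := hcond j hj
  have h2 := le_abs_self (bm j + bn j - (bm ktil + bn ktil))
  gcongr ?x / C
  nlinarith
end

section
/- Let K ≥ 1, let (bᵐ, uᵐ) and (bⁿ, uⁿ) be opinions over K classes with uⁿ < 1, let C = 1 − ∑_{i ≠ j} bᵐ i · bⁿ j, assume C > 0, and let (b, u) be their belief constraint fusion (BCF). Then for every index j, the dissimilarity bᵐ j − b j satisfies the upper bound bᵐ j − b j ≤ bᵐ j · (1 + uᵐ)·(1 − uⁿ) / (1 + uᵐ·(1 − uⁿ)); in particular this bound tends to 0 as uⁿ tends to 1. -/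
/-- For opinions `(bᵐ, uᵐ)` and `(bⁿ, uⁿ)` with `uⁿ < 1` and BCF normalization
factor `C > 0`, the dissimilarity `bᵐ j − b j` between the beliefs of `Dᵐ` and the BCF
combined opinion is bounded above by `bᵐ j · (1 + uᵐ)(1 − uⁿ) / (1 + uᵐ(1 − uⁿ))`,
a bound tending to 0 as `uⁿ → 1`. -/
theorem bcf_dissimilarity_bound
    (K : ℕ) (hK : 1 ≤ K)
    (bm bn : Fin K → ℝ) (um un : ℝ)
    (hbm : ∀ k, 0 ≤ bm k) (hum : 0 ≤ um) (hsm : (∑ k, bm k) + um = 1)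
    (hbn : ∀ k, 0 ≤ bn k) (hun : 0 ≤ un) (hsn : (∑ k, bn k) + un = 1)
    (hun1 : un < 1)
    (C : ℝ)
    (hC : C = 1 - ∑ i, ∑ j, if i ≠ j then bm i * bn j else 0)
    (hCpos : 0 < C)
    (b : Fin K → ℝ)
    (hb : ∀ k, b k = (bm k * bn k + bm k * un + bn k * um) / C) :
    ∀ j, bm j - b j ≤ bm j * (1 + um) * (1 - un) / (1 + um * (1 - un)) := by
  intro j
  have hinner : ∀ i : Fin K, (∑ j', if i ≠ j' then bm i * bn j' else 0)
      = bm i * (∑ k, bn k) - bm i * bn i := by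
    intro i
    have h1 : ∀ j' : Fin K, (if i ≠ j' then bm i * bn j' else 0)
        = bm i * bn j' - (if i = j' then bm i * bn j' else 0) := by
      intro j'; by_cases h : i = j' <;> simp [h]
    rw [Finset.sum_congr rfl (fun j' _ => h1 j'), Finset.sum_sub_distrib,
      Finset.sum_ite_eq, ← Finset.mul_sum]
    simp
  have hCval : C = 1 - ((∑ k, bm k) * (∑ k, bn k) - ∑ k, bm k * bn k) := by
    rw [hC, Finset.sum_congr rfl (fun i _ => hinner i), Finset.sum_sub_distrib,
      ← Finset.sum_mul]
  have hS : (∑ k, bm k) = 1 - um := by linarith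
  have hT : (∑ k, bn k) = 1 - un := by linarith
  have hbm1 : ∀ k, bm k ≤ 1 := by
    intro k
    have h := Finset.single_le_sum (f := bm) (fun i _ => hbm i) (Finset.mem_univ k)
    linarith
  have hD0 : 0 ≤ ∑ k, bm k * bn k :=
    Finset.sum_nonneg fun k _ => mul_nonneg (hbm k) (hbn k)
  have hDT : (∑ k, bm k * bn k) ≤ ∑ k, bn k := by
    apply Finset.sum_le_sum
    intro k _
    nlinarith [hbm k, hbn k, hbm1 k]
  have hP : 0 < 1 + um * (1 - un) := by nlinarith
  rw [hb j]
  have heq : bm j - (bm j * bn j + bm j * un + bn j * um) / C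
      = (bm j * C - (bm j * bn j + bm j * un + bn j * um)) / C := by
    field_simp
  rw [heq, div_le_div_iff₀ hCpos hP]
  have hCval' : C = 1 - ((1 - um) * (1 - un) - ∑ k, bm k * bn k) := by
    rw [hCval, hS, hT]
  rw [hCval']
  nlinarith [mul_nonneg (mul_nonneg (hbm j) hun) (by linarith : (0:ℝ) ≤ (1 - un) - ∑ k, bm k * bn k),
    mul_nonneg (mul_nonneg (hbm j) (hbn j)) hP.le,
    mul_nonneg (mul_nonneg (hbn j) hum) hP.le]
end

section
/- Let (bᵐ, uᵐ) and (bⁿ, uⁿ) be opinions over K classes with 0 < uᵐ ≤ 1 and 0 < uⁿ ≤ 1, and let (b, u) be their cumulative belief fusion (CBF). Then u ≤ uᵐ and u ≤ uⁿ, i.e. u ≤ min(uᵐ, uⁿ); moreover, if additionally uᵐ < 1 and uⁿ < 1, then u < min(uᵐ, uⁿ). Thus cumulative fusion never increases, and generically strictly decreases, the uncertainty. -/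
/-- Cumulative belief fusion never increases the uncertainty:
`u ≤ uᵐ` and `u ≤ uⁿ` (i.e. `u ≤ min uᵐ uⁿ`); if moreover `uᵐ < 1` and `uⁿ < 1`, then
`u < min uᵐ uⁿ` strictly. -/
theorem cbf_uncertainty_decreases
    (K : ℕ)
    (bm bn : Fin K → ℝ) (um un : ℝ)
    (hbm : ∀ k, 0 ≤ bm k) (hum : 0 < um) (hum1 : um ≤ 1) (hsm : (∑ k, bm k) + um = 1)
    (hbn : ∀ k, 0 ≤ bn k) (hun : 0 < un) (hun1 : un ≤ 1) (hsn : (∑ k, bn k) + un = 1)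
    (u : ℝ)
    (hu : u = um * un / (um + un - um * un)) :
    u ≤ um ∧ u ≤ un ∧ u ≤ min um un ∧
      (um < 1 → un < 1 → u < min um un) := by
  have hD : 0 < um + un - um * un := by nlinarith
  have h1 : u ≤ um := by
    rw [hu, div_le_iff₀ hD]
    nlinarith [mul_nonneg (mul_nonneg hum.le hum.le) (sub_nonneg.2 hun1)]
  have h2 : u ≤ un := by
    rw [hu, div_le_iff₀ hD]
    nlinarith [mul_nonneg (mul_nonneg hun.le hun.le) (sub_nonneg.2 hum1)]
  refine ⟨h1, h2, le_min h1 h2, fun hm1 hn1 => ?_⟩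
  have h1' : u < um := by
    rw [hu, div_lt_iff₀ hD]
    nlinarith [mul_pos (mul_pos hum hum) (sub_pos.2 hn1)]
  have h2' : u < un := by
    rw [hu, div_lt_iff₀ hD]
    nlinarith [mul_pos (mul_pos hun hun) (sub_pos.2 hm1)]
  exact lt_min h1' h2'
end

section
/- Let K ≥ 1, W > 0, and let eᵐ, eⁿ : Fin K → ℝ be evidence vectors with eᵐ k ≥ 0 and eⁿ k ≥ 0 for all k. Let (bᵐ, uᵐ) and (bⁿ, uⁿ) be the opinions associated to eᵐ and eⁿ via the evidence-to-opinion map. Then the cumulative belief fusion (CBF) of (bᵐ, uᵐ) and (bⁿ, uⁿ) equals the opinion associated to the evidence vector eᵐ + eⁿ; in other words, when all views share the same base rate, CBF is equivalent to adding up the evidence. -/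
/-- When all views share the same base rate, cumulative belief fusion is
equivalent to adding up the evidence: the CBF of the opinions associated to evidence
vectors `eᵐ` and `eⁿ` (via `b k = e k / S`, `u = W / S`, `S = (∑ k, e k) + W`) equals
the opinion associated to `eᵐ + eⁿ`. -/
theorem cbf_adds_evidence
    (K : ℕ) (hK : 1 ≤ K) (W : ℝ) (hW : 0 < W)
    (em en : Fin K → ℝ)
    (hem : ∀ k, 0 ≤ em k) (hen : ∀ k, 0 ≤ en k)
    (Sm Sn : ℝ)
    (hSm : Sm = (∑ k, em k) + W) (hSn : Sn = (∑ k, en k) + W)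
    (bm bn : Fin K → ℝ) (um un : ℝ)
    (hbm : ∀ k, bm k = em k / Sm) (hum : um = W / Sm)
    (hbn : ∀ k, bn k = en k / Sn) (hun : un = W / Sn)
    (S : ℝ) (hS : S = (∑ k, (em k + en k)) + W) :
    (∀ k, (bm k * un + bn k * um) / (um + un - um * un) = (em k + en k) / S) ∧
      um * un / (um + un - um * un) = W / S := by
  have hsm : 0 ≤ ∑ k, em k := Finset.sum_nonneg fun k _ => hem k
  have hsn : 0 ≤ ∑ k, en k := Finset.sum_nonneg fun k _ => hen k
  have hSm0 : 0 < Sm := by rw [hSm]; linarith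
  have hSn0 : 0 < Sn := by rw [hSn]; linarith
  have hS0 : 0 < S := by rw [hS, Finset.sum_add_distrib]; linarith
  have hSsum : S = Sm + Sn - W := by
    rw [hS, hSm, hSn, Finset.sum_add_distrib]; ring
  have hden : um + un - um * un = W * S / (Sm * Sn) := by
    rw [hum, hun, hSsum]; field_simp; ring
  have hden0 : W * S / (Sm * Sn) ≠ 0 := by positivity
  constructor
  · intro k
    rw [hden, hbm k, hbn k, hum, hun]
    field_simp
  · rw [hden, hum, hun]
    field_simp
end

section
/- On the set of opinions over K classes with strictly positive uncertainty, the cumulative belief fusion (CBF) operator ⊕ is commutative and associative: for opinions D¹, D², D³ with u¹ > 0, u² > 0, u³ > 0, one has D¹ ⊕ D² = D² ⊕ D¹ and (D¹ ⊕ D²) ⊕ D³ = D¹ ⊕ (D² ⊕ D³) (all intermediate fusions being well-defined, with strictly positive combined uncertainty). -/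
open Finset

/-- The cumulative belief fusion (CBF) of two opinions, each given as a pair of a
belief function `Fin K → ℝ` and an uncertainty in `ℝ`. -/
noncomputable def cbf {K : ℕ} (D1 D2 : (Fin K → ℝ) × ℝ) : (Fin K → ℝ) × ℝ :=
  (fun k => (D1.1 k * D2.2 + D2.1 k * D1.2) / (D1.2 + D2.2 - D1.2 * D2.2),
   D1.2 * D2.2 / (D1.2 + D2.2 - D1.2 * D2.2))

/-- On opinions with strictly positive uncertainty, the cumulative belief
fusion operator is commutative and associative, all intermediate fusions being
well-defined with strictly positive combined uncertainty. -/
theorem cbf_comm_assoc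
    (K : ℕ)
    (D1 D2 D3 : (Fin K → ℝ) × ℝ)
    (h1b : ∀ k, 0 ≤ D1.1 k) (h1u : 0 < D1.2) (h1s : (∑ k, D1.1 k) + D1.2 = 1)
    (h2b : ∀ k, 0 ≤ D2.1 k) (h2u : 0 < D2.2) (h2s : (∑ k, D2.1 k) + D2.2 = 1)
    (h3b : ∀ k, 0 ≤ D3.1 k) (h3u : 0 < D3.2) (h3s : (∑ k, D3.1 k) + D3.2 = 1) :
    cbf D1 D2 = cbf D2 D1 ∧
    cbf (cbf D1 D2) D3 = cbf D1 (cbf D2 D3) ∧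
    0 < (cbf D1 D2).2 ∧ 0 < (cbf D2 D3).2 ∧
    0 < (cbf (cbf D1 D2) D3).2 := by
  set u1 := D1.2 with hu1
  set u2 := D2.2 with hu2
  set u3 := D3.2 with hu3
  have h1le : u1 ≤ 1 := by
    nlinarith [Finset.sum_nonneg (fun k (_ : k ∈ Finset.univ) => h1b k)]
  have h2le : u2 ≤ 1 := by
    nlinarith [Finset.sum_nonneg (fun k (_ : k ∈ Finset.univ) => h2b k)]
  have h3le : u3 ≤ 1 := by
    nlinarith [Finset.sum_nonneg (fun k (_ : k ∈ Finset.univ) => h3b k)]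
  have d12 : 0 < u1 + u2 - u1 * u2 := by nlinarith
  have d23 : 0 < u2 + u3 - u2 * u3 := by nlinarith
  have E : 0 < u1 * u2 + u1 * u3 + u2 * u3 - 2 * (u1 * u2 * u3) := by nlinarith [mul_pos h1u h3u, mul_nonneg (mul_nonneg h1u.le h2u.le) (sub_nonneg.2 h3le), mul_nonneg (mul_nonneg h2u.le h3u.le) (sub_nonneg.2 h1le)]
  have hc12 : (cbf D1 D2).2 = u1 * u2 / (u1 + u2 - u1 * u2) := rfl
  have hc23 : (cbf D2 D3).2 = u2 * u3 / (u2 + u3 - u2 * u3) := rfl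
  have p12 : 0 < (cbf D1 D2).2 := by
    rw [hc12]; positivity
  have p23 : 0 < (cbf D2 D3).2 := by
    rw [hc23]; positivity
  have dA : (cbf D1 D2).2 + u3 - (cbf D1 D2).2 * u3
      = (u1 * u2 + u1 * u3 + u2 * u3 - 2 * (u1 * u2 * u3)) / (u1 + u2 - u1 * u2) := by
    rw [hc12]; field_simp; ring
  have dB : u1 + (cbf D2 D3).2 - u1 * (cbf D2 D3).2
      = (u1 * u2 + u1 * u3 + u2 * u3 - 2 * (u1 * u2 * u3)) / (u2 + u3 - u2 * u3) := by
    rw [hc23]; field_simp; ring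
  have pA : 0 < (cbf D1 D2).2 + u3 - (cbf D1 D2).2 * u3 := by
    rw [dA]; positivity
  have pB : 0 < u1 + (cbf D2 D3).2 - u1 * (cbf D2 D3).2 := by
    rw [dB]; positivity
  refine ⟨?_, ?_, p12, p23, ?_⟩
  · unfold cbf
    refine Prod.ext ?_ ?_
    · funext k
      simp only
      rw [show D2.2 + D1.2 - D2.2 * D1.2 = D1.2 + D2.2 - D1.2 * D2.2 by ring]
      ring_nf
    · simp only
      rw [show D2.2 + D1.2 - D2.2 * D1.2 = D1.2 + D2.2 - D1.2 * D2.2 by ring]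
      ring_nf
  · have e12 : (cbf D1 D2).1 = fun k => (D1.1 k * u2 + D2.1 k * u1) / (u1 + u2 - u1 * u2) := rfl
    have e23 : (cbf D2 D3).1 = fun k => (D2.1 k * u3 + D3.1 k * u2) / (u2 + u3 - u2 * u3) := rfl
    refine Prod.ext ?_ ?_
    · funext k
      show ((cbf D1 D2).1 k * u3 + D3.1 k * (cbf D1 D2).2) / ((cbf D1 D2).2 + u3 - (cbf D1 D2).2 * u3)
          = (D1.1 k * (cbf D2 D3).2 + (cbf D2 D3).1 k * u1) / (u1 + (cbf D2 D3).2 - u1 * (cbf D2 D3).2)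
      rw [dA, dB, hc12, hc23, e12, e23]
      simp only
      have hE := E.ne'
      have h12 := d12.ne'
      have h23 := d23.ne'
      field_simp
      rw [div_eq_div_iff (mul_ne_zero (by rw [mul_comm u2 u1]; exact h12) (by intro h; apply hE; linarith)) (by intro h; apply hE; linarith)]
      ring
    · show (cbf D1 D2).2 * u3 / ((cbf D1 D2).2 + u3 - (cbf D1 D2).2 * u3)
          = u1 * (cbf D2 D3).2 / (u1 + (cbf D2 D3).2 - u1 * (cbf D2 D3).2)
      rw [dA, dB, hc12, hc23]
      field_simp
  · show 0 < (cbf D1 D2).2 * u3 / ((cbf D1 D2).2 + u3 - (cbf D1 D2).2 * u3)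
    positivity
end

section
/- Let K ≥ 1 and W > 0. The evidence-to-opinion map sending an evidence vector e : Fin K → ℝ with e k ≥ 0 for all k to the pair (b, u) with b k = e k / ((∑ k, e k) + W) and u = W / ((∑ k, e k) + W) is a bijection from the set {e : Fin K → ℝ | ∀ k, e k ≥ 0} onto the set of opinions with strictly positive uncertainty {(b, u) | (∀ k, b k ≥ 0) ∧ 0 < u ∧ u ≤ 1 ∧ (∑ k, b k) + u = 1}, with inverse given by e k = W · b k / u. -/
private lemma Spos {K : ℕ} (W : ℝ) (hW : 0 < W) (e : Fin K → ℝ)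
    (he : ∀ k, 0 ≤ e k) : 0 < (∑ k, e k) + W := by
  have : 0 ≤ ∑ k, e k := Finset.sum_nonneg fun k _ => he k
  linarith

private lemma leftinv {K : ℕ} (W : ℝ) (hW : 0 < W) (e : Fin K → ℝ)
    (he : ∀ k, 0 ≤ e k) :
    ∀ k, W * (e k / ((∑ k, e k) + W)) / (W / ((∑ k, e k) + W)) = e k := by
  intro k
  have hS := Spos W hW e he
  field_simp

private lemma rightinv {K : ℕ} (W : ℝ) (hW : 0 < W) (D : (Fin K → ℝ) × ℝ)
    (hb : ∀ k, 0 ≤ D.1 k) (hu : 0 < D.2) (hu1 : D.2 ≤ 1)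
    (hsum : (∑ k, D.1 k) + D.2 = 1) :
    (fun e : Fin K → ℝ =>
      ((fun k => e k / ((∑ k, e k) + W), W / ((∑ k, e k) + W)) : (Fin K → ℝ) × ℝ))
      (fun k => W * D.1 k / D.2) = D := by
  have hu0 : D.2 ≠ 0 := ne_of_gt hu
  have hsumE : (∑ k, W * D.1 k / D.2) = W * (1 - D.2) / D.2 := by
    rw [← Finset.sum_div, ← Finset.mul_sum]
    have : (∑ k, D.1 k) = 1 - D.2 := by linarith
    rw [this]
  have hS : (∑ k, W * D.1 k / D.2) + W = W / D.2 := by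
    rw [hsumE]; field_simp; ring
  simp only
  rw [hS]
  ext k
  · simp only
    field_simp
  · simp only
    field_simp

/-- The evidence-to-opinion map
`e ↦ (fun k => e k / ((∑ k, e k) + W), W / ((∑ k, e k) + W))`
is a bijection from the set of nonnegative evidence vectors onto the set of opinions
with strictly positive uncertainty, with inverse given by `e k = W · b k / u`. -/
theorem evidence_opinion_bijection
    (K : ℕ) (hK : 1 ≤ K) (W : ℝ) (hW : 0 < W) :
    Set.BijOn
      (fun e : Fin K → ℝ =>
        ((fun k => e k / ((∑ k, e k) + W), W / ((∑ k, e k) + W)) : (Fin K → ℝ) × ℝ))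
      {e : Fin K → ℝ | ∀ k, 0 ≤ e k}
      {D : (Fin K → ℝ) × ℝ |
        (∀ k, 0 ≤ D.1 k) ∧ 0 < D.2 ∧ D.2 ≤ 1 ∧ (∑ k, D.1 k) + D.2 = 1} ∧
    (∀ e : Fin K → ℝ, (∀ k, 0 ≤ e k) →
      ∀ k, W * (e k / ((∑ k, e k) + W)) / (W / ((∑ k, e k) + W)) = e k) ∧
    (∀ D : (Fin K → ℝ) × ℝ,
      (∀ k, 0 ≤ D.1 k) → 0 < D.2 → D.2 ≤ 1 → (∑ k, D.1 k) + D.2 = 1 →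
      (fun e : Fin K → ℝ =>
        ((fun k => e k / ((∑ k, e k) + W), W / ((∑ k, e k) + W)) : (Fin K → ℝ) × ℝ))
        (fun k => W * D.1 k / D.2) = D) := by
  refine ⟨⟨?_, ?_, ?_⟩, fun e he => leftinv W hW e he,
    fun D hb hu hu1 hsum => rightinv W hW D hb hu hu1 hsum⟩
  · intro e he
    have hS := Spos W hW e he
    have hsum0 : 0 ≤ ∑ k, e k := Finset.sum_nonneg fun k _ => he k
    refine ⟨fun k => div_nonneg (he k) hS.le, div_pos hW hS, ?_, ?_⟩
    · rw [div_le_one hS]; linarith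
    · simp only
      rw [← Finset.sum_div, ← add_div, div_self (ne_of_gt hS)]
  · intro e he e' he' h
    funext k
    have h1 := leftinv W hW e he k
    have h2 := leftinv W hW e' he' k
    rw [← h1, ← h2]
    simp only at h
    have hb := congrArg Prod.fst h
    have hu := congrArg Prod.snd h
    simp only at hb hu
    rw [congrFun hb k, hu]
  · intro D hD
    obtain ⟨hb, hu, hu1, hsum⟩ := hD
    refine ⟨fun k => W * D.1 k / D.2, fun k => ?_, rightinv W hW D hb hu hu1 hsum⟩
    exact div_nonneg (mul_nonneg hW.le (hb k)) hu.le
end
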